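/- Let C ⊆ ℝⁿ be a nonempty closed convex set and x, y ∈ C. Then N_C(x) ⊆ N_C(y) if and only if G_ex(y) ⊆ G_ex(x), where G_ex denotes the minimal exposed face generated by a point. -/

import Mathlib

open scoped RealInnerProductSpace

/-- Normal cone of a convex set at a point. -/
noncomputable def NCone {n : ℕ} (C : Set (EuclideanSpace ℝ (Fin n)))
    (x : EuclideanSpace ℝ (Fin n)) : Set (EuclideanSpace ℝ (Fin n)) :=
  {v | ∀ z ∈ C, ⟪v, z - x⟫ ≤ 0}

/-- Minimal exposed face of `C` generated by `x`: the intersection of all exposed faces of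
`C` containing `x`. -/
def GEx {n : ℕ} (C : Set (EuclideanSpace ℝ (Fin n))) (x : EuclideanSpace ℝ (Fin n)) :
    Set (EuclideanSpace ℝ (Fin n)) :=
  ⋂₀ {F | IsExposed ℝ C F ∧ x ∈ F}

/-!
Both sides say that every exposed face of `C` through `x` also passes through `y`: a vector `v`
lies in `N_C(x)` exactly when `x` lies in the face exposed by `⟪v, ·⟫`, and by the Riesz
representation every nonempty exposed face is exposed by such a functional.
-/

theorem IsExposed.exists_eq_toExposed_innerSL {E : Type*} [NormedAddCommGroup E]
    [InnerProductSpace ℝ E] [CompleteSpace E] {C F : Set E} (hF : IsExposed ℝ C F)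
    (hFne : F.Nonempty) : ∃ v : E, F = (innerSL ℝ v).toExposed C := by
  obtain ⟨l, rfl⟩ := hF hFne
  refine ⟨(InnerProductSpace.toDual ℝ E).symm l, ?_⟩
  congr 1
  ext w
  simp [InnerProductSpace.toDual_symm_apply]

section

variable {n : ℕ} {C : Set (EuclideanSpace ℝ (Fin n))} {x y : EuclideanSpace ℝ (Fin n)}

theorem mem_NCone_iff_mem_toExposed (hx : x ∈ C) (v : EuclideanSpace ℝ (Fin n)) :
    v ∈ NCone C x ↔ x ∈ (innerSL ℝ v).toExposed C := by
  simp only [NCone, ContinuousLinearMap.toExposed, innerSL_apply_apply, inner_sub_right,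
    sub_nonpos, Set.mem_ofPred_eq]
  exact ⟨fun h => ⟨hx, h⟩, And.right⟩

theorem GEx_subset_GEx_iff :
    GEx C y ⊆ GEx C x ↔ ∀ F, IsExposed ℝ C F → x ∈ F → y ∈ F :=
  ⟨fun h F hF hxF => h (fun _ hG => hG.2) F ⟨hF, hxF⟩,
    fun h _ hz F ⟨hF, hxF⟩ => hz F ⟨hF, h F hF hxF⟩⟩

end

theorem stmt9_general {n : ℕ} (C : Set (EuclideanSpace ℝ (Fin n)))
    (x y : EuclideanSpace ℝ (Fin n)) (hx : x ∈ C) (hy : y ∈ C) :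
    NCone C x ⊆ NCone C y ↔ GEx C y ⊆ GEx C x := by
  rw [GEx_subset_GEx_iff]
  constructor
  · intro hN F hF hxF
    obtain ⟨v, rfl⟩ := hF.exists_eq_toExposed_innerSL ⟨x, hxF⟩
    exact (mem_NCone_iff_mem_toExposed hy v).1 (hN ((mem_NCone_iff_mem_toExposed hx v).2 hxF))
  · intro hG v hv
    exact (mem_NCone_iff_mem_toExposed hy v).2 <|
      hG _ ContinuousLinearMap.toExposed.isExposed ((mem_NCone_iff_mem_toExposed hx v).1 hv)

/-- for a nonempty closed convex `C` and `x, y ∈ C`,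
`N_C(x) ⊆ N_C(y)` iff `G_ex(y) ⊆ G_ex(x)`. -/
theorem stmt9 {n : ℕ} (C : Set (EuclideanSpace ℝ (Fin n)))
    (hCne : C.Nonempty) (hCcl : IsClosed C) (hCcv : Convex ℝ C)
    (x y : EuclideanSpace ℝ (Fin n)) (hx : x ∈ C) (hy : y ∈ C) :
    NCone C x ⊆ NCone C y ↔ GEx C y ⊆ GEx C x :=
  stmt9_general C x y hx hy
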